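/- arXiv:2110.09516 — 2 statements merged into one kernel-verified Lean document; each statement's English description precedes it below -/
import Mathlib

section
/- Let $b>0$, $\sigma>0$ with $b\sigma^2<1$, and $m_0,m_1\in\mathbb{R}$. Writing $\rho = b\sigma^2$, for $X\sim\mathcal{N}(m_0,\sigma^2)$ and $Y\sim\mathcal{N}(m_1,\sigma^2)$ independent, $\mathbb{E}\,e^{bXY} = \frac{1}{\sqrt{1-\rho^2}} \exp\left(\frac{b\rho(m_0^2+m_1^2)+2bm_0m_1}{2(1-\rho^2)}\right)$. -/
/-!
Integrating in `y` first, the inner integral is the moment generating function of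
`𝒩(m₁, σ²)` at `t = b x`, namely `exp (b m₁ x + σ² b² x² / 2)`. What remains is the integral of
the `𝒩(m₀, σ²)` density against the exponential of a quadratic in `x` whose leading coefficient
`b² σ² / 2` is below the critical value `1 / (2 σ²)` exactly when `(b σ²)² < 1`; completing the
square gives the closed form.
-/

open Real MeasureTheory ProbabilityTheory
open scoped NNReal

theorem integral_exp_quadratic {a : ℝ} (ha : 0 < a) (c d : ℝ) :
    ∫ x : ℝ, rexp (-a * x ^ 2 + c * x + d) = √(π / a) * rexp (d + c ^ 2 / (4 * a)) := by
  apply Complex.ofReal_injective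
  rw [← integral_complex_ofReal]
  push_cast
  rw [integral_cexp_quadratic (by simpa using ha), sqrt_eq_rpow,
    Complex.ofReal_cpow (div_pos pi_pos ha).le]
  push_cast
  ring_nf

theorem integral_gaussianPDFReal_mul_exp_quadratic (m : ℝ) {v : ℝ≥0} (hv : v ≠ 0) {q : ℝ}
    (hq : 2 * q * v < 1) (t : ℝ) :
    ∫ x, gaussianPDFReal m v x * rexp (q * x ^ 2 + t * x)
      = 1 / √(1 - 2 * q * v) * rexp ((q * m ^ 2 + m * t + v * t ^ 2 / 2) / (1 - 2 * q * v)) := by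
  have hv_pos : (0 : ℝ) < v := NNReal.coe_pos.mpr (pos_iff_ne_zero.mpr hv)
  have hk : 0 < 1 - 2 * q * v := by linarith
  have h_integrand (x : ℝ) : gaussianPDFReal m v x * rexp (q * x ^ 2 + t * x)
      = (√(2 * π * v))⁻¹ *
        rexp (-((1 - 2 * q * v) / (2 * v)) * x ^ 2 + (m / v + t) * x + -(m ^ 2 / (2 * v))) := by
    rw [gaussianPDFReal, mul_assoc, ← exp_add]
    congr 2
    field_simp
    ring
  have h_exponent : -(m ^ 2 / (2 * v)) + (m / v + t) ^ 2 / (4 * ((1 - 2 * q * v) / (2 * v)))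
      = (q * m ^ 2 + m * t + v * t ^ 2 / 2) / (1 - 2 * q * v) := by
    -- `field_simp` does not recognise `1 - 2 * q * v` as nonzero unless it is an atom.
    generalize hk_def : 1 - 2 * q * v = k at hk
    field_simp
    rw [← hk_def]
    ring
  simp_rw [h_integrand, integral_const_mul]
  rw [integral_exp_quadratic (by positivity),
    show π / ((1 - 2 * q * v) / (2 * v)) = 2 * π * v / (1 - 2 * q * v) by field_simp,
    sqrt_div (by positivity), h_exponent]
  have : √(2 * π * v) ≠ 0 := by positivity
  field_simp

theorem integral_gaussianPDFReal_mul_exp (m : ℝ) {v : ℝ≥0} (hv : v ≠ 0) (t : ℝ) :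
    ∫ x, gaussianPDFReal m v x * rexp (t * x) = rexp (m * t + v * t ^ 2 / 2) := by
  simpa using integral_gaussianPDFReal_mul_exp_quadratic m hv (q := 0) (by simp) t

theorem exponential_kernel_cross_term_gaussians
    (b σ m₀ m₁ : ℝ) (hb : 0 < b) (hσ : 0 < σ) (hbσ : b * σ ^ 2 < 1) :
    ∫ x : ℝ, ∫ y : ℝ,
        (1 / Real.sqrt (2 * π * σ ^ 2)) * Real.exp (-(x - m₀) ^ 2 / (2 * σ ^ 2)) *
        ((1 / Real.sqrt (2 * π * σ ^ 2)) * Real.exp (-(y - m₁) ^ 2 / (2 * σ ^ 2))) *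
        Real.exp (b * x * y)
      = (1 / Real.sqrt (1 - (b * σ ^ 2) ^ 2)) *
        Real.exp ((b * (b * σ ^ 2) * (m₀ ^ 2 + m₁ ^ 2) + 2 * b * m₀ * m₁) /
          (2 * (1 - (b * σ ^ 2) ^ 2))) := by
  obtain ⟨v, hv⟩ : ∃ v : ℝ≥0, (v : ℝ) = σ ^ 2 := ⟨⟨σ ^ 2, sq_nonneg σ⟩, rfl⟩
  have hv0 : v ≠ 0 := by rw [← NNReal.coe_ne_zero, hv]; positivity
  have h_density (m x : ℝ) :
      1 / √(2 * π * σ ^ 2) * rexp (-(x - m) ^ 2 / (2 * σ ^ 2)) = gaussianPDFReal m v x := by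
    rw [gaussianPDFReal, hv, one_div]
  have h_inner (x : ℝ) : ∫ y, gaussianPDFReal m₀ v x * gaussianPDFReal m₁ v y * rexp (b * x * y)
      = gaussianPDFReal m₀ v x * rexp ((v * b ^ 2 / 2) * x ^ 2 + (b * m₁) * x) := by
    simp_rw [mul_assoc (gaussianPDFReal m₀ v x), integral_const_mul,
      integral_gaussianPDFReal_mul_exp m₁ hv0]
    congr 2
    ring
  have h_convergence : 2 * (v * b ^ 2 / 2) * v < 1 := by
    have hρ : 0 < b * σ ^ 2 := by positivity
    rw [hv]
    nlinarith
  simp_rw [h_density, h_inner]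
  rw [integral_gaussianPDFReal_mul_exp_quadratic m₀ hv0 h_convergence, hv,
    show 1 - 2 * (σ ^ 2 * b ^ 2 / 2) * σ ^ 2 = 1 - (b * σ ^ 2) ^ 2 by ring]
  congr 2
  rw [mul_comm 2, ← div_div]
  ring
end

section
/- Let $b>0$, $\sigma>0$ with $\rho:=b\sigma^2<1$, and $m_0,m_1\in\mathbb{R}$. Setting $P=\mathcal{N}(m_0,\sigma^2)$, $Q=\mathcal{N}(m_1,\sigma^2)$, and $k(x,y)=e^{bxy}$, the squared MMD, defined as $\mathbb{E}_{x,x'\sim P}k(x,x') + \mathbb{E}_{y,y'\sim Q}k(y,y') - 2\mathbb{E}_{x\sim P, y\sim Q}k(x,y)$ (with all pairs independent), equals $\frac{1}{\sqrt{1-\rho^2}}\left[e^{bm_0^2/(1-\rho)} + e^{bm_1^2/(1-\rho)} - 2\exp\left(\frac{b\rho(m_0^2+m_1^2)+2bm_0m_1}{2(1-\rho^2)}\right)\right]$. -/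
/-!
Both variables are Gaussian, so every expectation `E exp (b x y)` can be computed by two
successive Gaussian integrals. Integrating out `y ~ N(m', σ²)` gives the moment generating
function `exp (b m' x + b² σ² x² / 2)`, which is again the exponential of a quadratic in `x`;
integrating it against `N(m, σ²)` is finite exactly when `ρ² = (b σ²)² < 1` and produces the
factor `1 / √(1 - ρ²)`.
-/

open Real MeasureTheory

lemma integral_exp_neg_mul_sq_add_mul (p q : ℝ) (hp : 0 < p) :
    ∫ x : ℝ, exp (-p * x ^ 2 + q * x) = √(π / p) * exp (q ^ 2 / (4 * p)) := by
  have complete_square : ∀ x : ℝ, exp (-p * x ^ 2 + q * x)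
      = exp (-p * (x - q / (2 * p)) ^ 2) * exp (q ^ 2 / (4 * p)) := fun x => by
    rw [← exp_add]
    congr 1
    field_simp
    ring
  simp_rw [complete_square]
  rw [integral_mul_const, integral_sub_right_eq_self (fun x => exp (-p * x ^ 2)),
    integral_gaussian]

lemma integral_gaussian_density_mul_exp_quadratic (σ m a c : ℝ) (hσ : σ ≠ 0)
    (ha : 2 * a * σ ^ 2 < 1) :
    ∫ x : ℝ, 1 / √(2 * π * σ ^ 2) * exp (-(x - m) ^ 2 / (2 * σ ^ 2)) * exp (a * x ^ 2 + c * x)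
      = 1 / √(1 - 2 * a * σ ^ 2) *
          exp ((a * m ^ 2 + c * m + c ^ 2 * σ ^ 2 / 2) / (1 - 2 * a * σ ^ 2)) := by
  have hd : 0 < 1 - 2 * a * σ ^ 2 := by linarith
  have hp : 0 < (1 - 2 * a * σ ^ 2) / (2 * σ ^ 2) := by positivity
  have expand : ∀ x : ℝ,
      1 / √(2 * π * σ ^ 2) * exp (-(x - m) ^ 2 / (2 * σ ^ 2)) * exp (a * x ^ 2 + c * x)
        = 1 / √(2 * π * σ ^ 2) * exp (-m ^ 2 / (2 * σ ^ 2)) *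
          exp (-((1 - 2 * a * σ ^ 2) / (2 * σ ^ 2)) * x ^ 2 + (m / σ ^ 2 + c) * x) :=
    fun x => by
      simp only [mul_assoc, ← exp_add]
      congr 2
      field_simp
      ring
  have exponent : -m ^ 2 / (2 * σ ^ 2) +
      (m / σ ^ 2 + c) ^ 2 / (4 * ((1 - 2 * a * σ ^ 2) / (2 * σ ^ 2)))
        = (a * m ^ 2 + c * m + c ^ 2 * σ ^ 2 / 2) / (1 - 2 * a * σ ^ 2) := by
    rw [div_add_div _ _ (by positivity) (by positivity), div_eq_div_iff (by positivity) hd.ne']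
    field_simp
    ring
  have variance : π / ((1 - 2 * a * σ ^ 2) / (2 * σ ^ 2))
      = 2 * π * σ ^ 2 / (1 - 2 * a * σ ^ 2) := by
    field_simp
  simp_rw [expand]
  rw [integral_const_mul, integral_exp_neg_mul_sq_add_mul _ _ hp, variance,
    sqrt_div (by positivity), ← exponent, exp_add]
  have : √(2 * π * σ ^ 2) ≠ 0 := by positivity
  field_simp

lemma integral_gaussian_density_mul_exp (σ m c : ℝ) (hσ : σ ≠ 0) :
    ∫ x : ℝ, 1 / √(2 * π * σ ^ 2) * exp (-(x - m) ^ 2 / (2 * σ ^ 2)) * exp (c * x)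
      = exp (c * m + c ^ 2 * σ ^ 2 / 2) := by
  simpa using integral_gaussian_density_mul_exp_quadratic σ m 0 c hσ (by norm_num)

lemma integral_integral_gaussian_densities_mul_exp_mul (b σ m m' : ℝ) (hσ : σ ≠ 0)
    (hρ : (b * σ ^ 2) ^ 2 < 1) :
    ∫ x : ℝ, ∫ y : ℝ,
        1 / √(2 * π * σ ^ 2) * exp (-(x - m) ^ 2 / (2 * σ ^ 2)) *
        (1 / √(2 * π * σ ^ 2) * exp (-(y - m') ^ 2 / (2 * σ ^ 2))) * exp (b * x * y)
      = 1 / √(1 - (b * σ ^ 2) ^ 2) *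
          exp ((b * (b * σ ^ 2) * (m ^ 2 + m' ^ 2) + 2 * b * m * m') /
            (2 * (1 - (b * σ ^ 2) ^ 2))) := by
  have inner : ∀ x : ℝ, ∫ y : ℝ,
      1 / √(2 * π * σ ^ 2) * exp (-(x - m) ^ 2 / (2 * σ ^ 2)) *
        (1 / √(2 * π * σ ^ 2) * exp (-(y - m') ^ 2 / (2 * σ ^ 2))) * exp (b * x * y)
      = 1 / √(2 * π * σ ^ 2) * exp (-(x - m) ^ 2 / (2 * σ ^ 2)) *
          exp (b ^ 2 * σ ^ 2 / 2 * x ^ 2 + b * m' * x) := fun x => by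
    have factor : ∀ y : ℝ,
        1 / √(2 * π * σ ^ 2) * exp (-(x - m) ^ 2 / (2 * σ ^ 2)) *
          (1 / √(2 * π * σ ^ 2) * exp (-(y - m') ^ 2 / (2 * σ ^ 2))) * exp (b * x * y)
        = 1 / √(2 * π * σ ^ 2) * exp (-(x - m) ^ 2 / (2 * σ ^ 2)) *
          (1 / √(2 * π * σ ^ 2) * exp (-(y - m') ^ 2 / (2 * σ ^ 2)) * exp (b * x * y)) :=
      fun y => by ring
    rw [integral_congr_ae (.of_forall factor), integral_const_mul,
      integral_gaussian_density_mul_exp σ m' (b * x) hσ]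
    congr 2
    ring
  simp_rw [inner]
  rw [integral_gaussian_density_mul_exp_quadratic σ m _ _ hσ (by nlinarith)]
  have variance : 1 - 2 * (b ^ 2 * σ ^ 2 / 2) * σ ^ 2 = 1 - (b * σ ^ 2) ^ 2 := by ring
  have hd : 1 - (b * σ ^ 2) ^ 2 ≠ 0 := by linarith
  rw [variance]
  congr 2
  field_simp
  ring

/-- Explicit squared MMD between two Gaussians of equal variance under the
exponential kernel `k(x,y) = exp (b*x*y)`. Densities are written explicitly and
expectations as integrals against those densities. -/
theorem explicit_mmd_gaussians_exponential_kernel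
    (b σ m₀ m₁ : ℝ) (hb : 0 < b) (hσ : 0 < σ) (hbσ : b * σ ^ 2 < 1) :
    (∫ x : ℝ, ∫ x' : ℝ,
        (1 / Real.sqrt (2 * π * σ ^ 2)) * Real.exp (-(x - m₀) ^ 2 / (2 * σ ^ 2)) *
        ((1 / Real.sqrt (2 * π * σ ^ 2)) * Real.exp (-(x' - m₀) ^ 2 / (2 * σ ^ 2))) *
        Real.exp (b * x * x')) +
    (∫ y : ℝ, ∫ y' : ℝ,
        (1 / Real.sqrt (2 * π * σ ^ 2)) * Real.exp (-(y - m₁) ^ 2 / (2 * σ ^ 2)) *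
        ((1 / Real.sqrt (2 * π * σ ^ 2)) * Real.exp (-(y' - m₁) ^ 2 / (2 * σ ^ 2))) *
        Real.exp (b * y * y')) -
    2 * (∫ x : ℝ, ∫ y : ℝ,
        (1 / Real.sqrt (2 * π * σ ^ 2)) * Real.exp (-(x - m₀) ^ 2 / (2 * σ ^ 2)) *
        ((1 / Real.sqrt (2 * π * σ ^ 2)) * Real.exp (-(y - m₁) ^ 2 / (2 * σ ^ 2))) *
        Real.exp (b * x * y))
      = (1 / Real.sqrt (1 - (b * σ ^ 2) ^ 2)) *
          (Real.exp (b * m₀ ^ 2 / (1 - b * σ ^ 2)) +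
           Real.exp (b * m₁ ^ 2 / (1 - b * σ ^ 2)) -
           2 * Real.exp ((b * (b * σ ^ 2) * (m₀ ^ 2 + m₁ ^ 2) + 2 * b * m₀ * m₁) /
             (2 * (1 - (b * σ ^ 2) ^ 2)))) := by
  have hρ_pos : 0 < b * σ ^ 2 := by positivity
  have hρ : (b * σ ^ 2) ^ 2 < 1 := by nlinarith
  have diagonal_exponent : ∀ m : ℝ,
      (b * (b * σ ^ 2) * (m ^ 2 + m ^ 2) + 2 * b * m * m) / (2 * (1 - (b * σ ^ 2) ^ 2))
        = b * m ^ 2 / (1 - b * σ ^ 2) := fun m => by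
    have h₁ : 1 - b * σ ^ 2 ≠ 0 := by linarith
    have h₂ : 1 + b * σ ^ 2 ≠ 0 := by linarith
    rw [show 1 - (b * σ ^ 2) ^ 2 = (1 - b * σ ^ 2) * (1 + b * σ ^ 2) by ring]
    field_simp
    ring
  simp only [integral_integral_gaussian_densities_mul_exp_mul b σ _ _ hσ.ne' hρ,
    diagonal_exponent]
  ring
end
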